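/- arXiv:2507.06422 — 2 statements merged into one kernel-verified Lean document; each statement's English description precedes it below -/
import Mathlib

section
/- Let λ0 > 0, β > 0, P > 0. Define λ(T) = λ0/(1+β·T), q*(P,λ) = 1/(1+exp(−λ·P)), H(q) = q·ln q + (1−q)·ln(1−q), and V(λ) = −(1/λ)·ln(1+exp(−λ·P)). Then for every T ≥ 0, the map T ↦ V(λ(T)) is differentiable at T with derivative (β/λ0)·H(q*(P,λ(T))), and this derivative is strictly negative. -/
/-- The optimal cancellation probability `q*(P,lam) = 1/(1+exp(−lam·P))`. -/
noncomputable def qstar (P lam : ℝ) : ℝ := 1 / (1 + Real.exp (-(lam * P)))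

/-- Negative Shannon entropy of a binary outcome with probability `q`. -/
noncomputable def H (q : ℝ) : ℝ := q * Real.log q + (1 - q) * Real.log (1 - q)

/-- The minimized expected loss `V(lam) = −(1/lam)·ln(1+exp(−lam·P))`. -/
noncomputable def V (P lam : ℝ) : ℝ := -(1 / lam) * Real.log (1 + Real.exp (-(lam * P)))

/-- Hyperbolic decay of attention sensitivity with trial length `T`. -/
noncomputable def attn (lam0 beta T : ℝ) : ℝ := lam0 / (1 + beta * T)

/-- envelope computation behind the IR-Slack, equation (5): For
`lam0 > 0`, `beta > 0`, `P > 0` and every `T ≥ 0`, the map `T ↦ V(lam(T))` is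
differentiable at `T` with derivative `(beta/lam0)·H(q*(P,lam(T)))`, and this
derivative is strictly negative. -/
theorem value_hasDerivAt_trial (lam0 beta P : ℝ)
    (hlam0 : 0 < lam0) (hbeta : 0 < beta) (hP : 0 < P) :
    ∀ T : ℝ, 0 ≤ T →
      HasDerivAt (fun T => V P (attn lam0 beta T))
        (beta / lam0 * H (qstar P (attn lam0 beta T))) T ∧
      beta / lam0 * H (qstar P (attn lam0 beta T)) < 0 := by
  intro T hT
  have hs : (0:ℝ) < 1 + beta * T := by nlinarith
  have hsne : (1 + beta * T) ≠ 0 := ne_of_gt hs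
  have hc : 0 < lam0 * P := mul_pos hlam0 hP
  set E := Real.exp (-(lam0 * P / (1 + beta * T))) with hE_def
  have hE : 0 < E := Real.exp_pos _
  have h1E : (0:ℝ) < 1 + E := by linarith
  -- rewrite the composed function
  have hfun : (fun t => V P (attn lam0 beta t)) =
      fun t => -((1 + beta * t) / lam0) * Real.log (1 + Real.exp (-(lam0 * P / (1 + beta * t)))) := by
    funext t
    simp only [V, attn]
    rw [one_div_div, div_mul_eq_mul_div]
  -- qstar value
  have hq : qstar P (attn lam0 beta T) = 1 / (1 + E) := by
    simp only [qstar, attn, hE_def, div_mul_eq_mul_div]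
  -- derivatives
  have hlin : HasDerivAt (fun t => 1 + beta * t) beta T := by
    simpa using ((hasDerivAt_id T).const_mul beta).const_add 1
  have hinv : HasDerivAt (fun t => lam0 * P / (1 + beta * t))
      (-(lam0 * P * beta) / (1 + beta * T)^2) T := by
    have h := (hasDerivAt_const T (lam0 * P)).div hlin hsne
    refine h.congr_deriv ?_
    ring
  have hexp : HasDerivAt (fun t => Real.exp (-(lam0 * P / (1 + beta * t))))
      (E * (lam0 * P * beta / (1 + beta * T)^2)) T := by
    have h := (hinv.neg).exp
    refine h.congr_deriv ?_
    rw [hE_def]; simp only [Pi.neg_apply]; ring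
  have hlog : HasDerivAt (fun t => Real.log (1 + Real.exp (-(lam0 * P / (1 + beta * t)))))
      ((E * (lam0 * P * beta / (1 + beta * T)^2)) / (1 + E)) T := by
    have h := (hexp.const_add 1).log (ne_of_gt h1E)
    convert h using 2
  have hcoef : HasDerivAt (fun t => -((1 + beta * t) / lam0)) (-(beta / lam0)) T :=
    (hlin.div_const lam0).neg
  have hD : HasDerivAt (fun t => -((1 + beta * t) / lam0) * Real.log (1 + Real.exp (-(lam0 * P / (1 + beta * t)))))
      (-(beta / lam0) * Real.log (1 + E) +
        -((1 + beta * T) / lam0) * ((E * (lam0 * P * beta / (1 + beta * T)^2)) / (1 + E))) T := by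
    have := hcoef.mul hlog
    exact this
  -- identity of derivatives
  have hlog1 : Real.log (1 / (1 + E)) = -Real.log (1 + E) := by
    rw [one_div, Real.log_inv]
  have hlog2 : Real.log (1 - 1 / (1 + E)) = -(lam0 * P / (1 + beta * T)) - Real.log (1 + E) := by
    have h1 : 1 - 1 / (1 + E) = E / (1 + E) := by field_simp; ring
    rw [h1, Real.log_div (ne_of_gt hE) (ne_of_gt h1E), hE_def, Real.log_exp]
  have hHeq : beta / lam0 * H (qstar P (attn lam0 beta T)) =
      -(beta / lam0) * Real.log (1 + E) +
        -((1 + beta * T) / lam0) * ((E * (lam0 * P * beta / (1 + beta * T)^2)) / (1 + E)) := by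
    rw [hq]
    simp only [H, hlog1, hlog2]
    field_simp
    ring
  have hHneg : H (qstar P (attn lam0 beta T)) < 0 := by
    rw [hq]
    have hq0 : (0:ℝ) < 1 / (1 + E) := by positivity
    have hq1 : 1 / (1 + E) < 1 := by
      rw [div_lt_one h1E]; linarith
    have hl1 : Real.log (1 / (1 + E)) < 0 := Real.log_neg hq0 hq1
    have hl2 : Real.log (1 - 1 / (1 + E)) < 0 := by
      apply Real.log_neg <;> [linarith; linarith]
    have := mul_pos hq0 (neg_pos.mpr hl1)
    unfold H
    nlinarith [mul_pos (sub_pos.mpr hq1) (neg_pos.mpr hl2)]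
  constructor
  · rw [hfun, hHeq]; exact hD
  · exact mul_neg_of_pos_of_neg (div_pos hbeta hlam0) hHneg
end

section
/- Let λ0 > 0, β > 0, P > 0, c > 0. Define λ(T) = λ0/(1+β·T), q*(P,λ) = 1/(1+exp(−λ·P)), H(q) = q·ln q + (1−q)·ln(1−q), D(T) = c·β·λ0·P²·q*(P,λ(T))·(1−q*(P,λ(T)))/(1+β·T)², and the IR-Slack S(T) = (β/λ0)·(−H(q*(P,λ(T))))·c. Then there exists T̄ ≥ 0 such that for all T ≥ T̄, P·D(T) < S(T). -/
/-- Marginal inattentive revenue. -/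
noncomputable def D (lam0 beta P c T : ℝ) : ℝ :=
  c * beta * lam0 * P ^ 2 * qstar P (attn lam0 beta T) *
    (1 - qstar P (attn lam0 beta T)) / (1 + beta * T) ^ 2

/-- The IR-Slack `S(T) = (beta/lam0)·(−H(q*(P,lam(T))))·c`. -/
noncomputable def S (lam0 beta P c T : ℝ) : ℝ :=
  beta / lam0 * (-(H (qstar P (attn lam0 beta T)))) * c

open Filter Real Topology

/-- step (A.4.6): For `lam0 > 0`, `beta > 0`, `P > 0`, `c > 0`, there
exists `T̄ ≥ 0` such that for all `T ≥ T̄`, `P·D(T) < S(T)`. -/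
theorem slack_eventually_dominates (lam0 beta P c : ℝ)
    (hlam0 : 0 < lam0) (hbeta : 0 < beta) (hP : 0 < P) (hc : 0 < c) :
    ∃ Tbar : ℝ, 0 ≤ Tbar ∧ ∀ T : ℝ, Tbar ≤ T →
      P * D lam0 beta P c T < S lam0 beta P c T := by
  have hden : Tendsto (fun T : ℝ => 1 + beta * T) atTop atTop := by
    apply tendsto_atTop_add_const_left
    exact (tendsto_id.const_mul_atTop hbeta)
  have hattn : Tendsto (fun T => attn lam0 beta T) atTop (𝓝 0) := by
    simpa [attn] using Tendsto.div_atTop (tendsto_const_nhds : Tendsto (fun _ : ℝ => lam0) atTop (𝓝 lam0)) hden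
  have hq : Tendsto (fun T => qstar P (attn lam0 beta T)) atTop (𝓝 (1/2)) := by
    have t1 : Tendsto (fun T => attn lam0 beta T * P) atTop (𝓝 0) := by
      simpa using hattn.mul_const P
    have t2 : Tendsto (fun T => Real.exp (-(attn lam0 beta T * P))) atTop (𝓝 1) := by
      have := (Real.continuous_exp.tendsto 0).comp
        (show Tendsto (fun T => -(attn lam0 beta T * P)) atTop (𝓝 0) by simpa using t1.neg)
      simpa [Function.comp_def] using this
    have t3 : Tendsto (fun T => 1 + Real.exp (-(attn lam0 beta T * P))) atTop (𝓝 2) := by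
      have := t2.const_add 1
      norm_num at this ⊢
      exact this
    have t4 := t3.inv₀ (by norm_num)
    simpa [qstar, one_div] using t4
  have hH : Tendsto (fun T => H (qstar P (attn lam0 beta T))) atTop (𝓝 (-Real.log 2)) := by
    have hlog : Tendsto (fun T => Real.log (qstar P (attn lam0 beta T))) atTop (𝓝 (Real.log (1/2))) :=
      ((Real.continuousAt_log (by norm_num)).tendsto).comp hq
    have hlog2 : Tendsto (fun T => Real.log (1 - qstar P (attn lam0 beta T))) atTop (𝓝 (Real.log (1 - 1/2))) := by
      have h1 : Tendsto (fun T => 1 - qstar P (attn lam0 beta T)) atTop (𝓝 (1 - 1/2)) :=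
        (tendsto_const_nhds).sub hq
      exact ((Real.continuousAt_log (by norm_num)).tendsto).comp h1
    have hcomb := (hq.mul hlog).add
      (((tendsto_const_nhds : Tendsto (fun _ : ℝ => (1:ℝ)) atTop (𝓝 1)).sub hq).mul hlog2)
    have heq : (1/2 : ℝ) * Real.log (1/2) + (1 - 1/2) * Real.log (1 - 1/2) = -Real.log 2 := by
      norm_num [Real.log_div, Real.log_one]
      ring
    rw [heq] at hcomb
    exact hcomb
  have hS : Tendsto (fun T => S lam0 beta P c T) atTop (𝓝 (beta / lam0 * Real.log 2 * c)) := by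
    have := (hH.neg.const_mul (beta / lam0)).mul_const c
    simpa [S] using this
  have hD : Tendsto (fun T => P * D lam0 beta P c T) atTop (𝓝 0) := by
    have hinv : Tendsto (fun T : ℝ => ((1 + beta * T)⁻¹) ^ 2) atTop (𝓝 0) := by
      have := (hden.inv_tendsto_atTop).pow 2
      simpa using this
    have hmain := ((hq.mul
      (((tendsto_const_nhds : Tendsto (fun _ : ℝ => (1:ℝ)) atTop (𝓝 1)).sub hq))).mul hinv).const_mul
      (P * (c * beta * lam0 * P ^ 2))
    have heq : ∀ T : ℝ, P * (c * beta * lam0 * P ^ 2) *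
        (qstar P (attn lam0 beta T) * (1 - qstar P (attn lam0 beta T)) * ((1 + beta * T)⁻¹) ^ 2)
        = P * D lam0 beta P c T := by
      intro T
      simp only [D, div_eq_mul_inv, inv_pow]
      ring
    rw [show (P * (c * beta * lam0 * P ^ 2) * (1/2 * (1 - 1/2) * 0)) = 0 by ring] at hmain
    exact Tendsto.congr heq hmain
  have hL : (0:ℝ) < beta / lam0 * Real.log 2 * c := by
    positivity
  have hdiff := hD.sub hS
  rw [zero_sub] at hdiff
  have hev : ∀ᶠ T in atTop, P * D lam0 beta P c T - S lam0 beta P c T < 0 :=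
    hdiff.eventually_lt_const (by linarith)
  obtain ⟨a, ha⟩ := eventually_atTop.mp hev
  refine ⟨max a 0, le_max_right _ _, fun T hT => ?_⟩
  have := ha T (le_trans (le_max_left a 0) hT)
  linarith
end
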